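/- There exists a Ricci-flat pseudo-Riemannian (Lorentzian) metric whose Riemann curvature tensor is not identically zero; consequently, the Einstein tensor can vanish identically while the Riemann tensor does not, so no constant multiple of the Einstein tensor can be non-zero whenever the Riemann tensor is non-zero. -/

import Mathlib

open scoped BigOperators

/-- Points of the coordinate manifold `ℝⁿ`. -/
abbrev Pt (n : ℕ) := Fin n → ℝ

/-- Partial derivative in the `i`-th coordinate direction. -/
noncomputable def pd {n : ℕ} (i : Fin n) (f : Pt n → ℝ) (x : Pt n) : ℝ :=
  fderiv ℝ f x (Pi.single i 1)

/-- A field of symmetric matrices on `ℝⁿ` (coordinate representation of a metric). -/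
abbrev MetricField (n : ℕ) := Pt n → Matrix (Fin n) (Fin n) ℝ

/-- `g` is a (coordinate) pseudo-Riemannian metric: smooth, symmetric, nondegenerate. -/
def IsMetric {n : ℕ} (g : MetricField n) : Prop :=
  (∀ i j : Fin n, ContDiff ℝ (⊤ : ℕ∞) fun x => g x i j) ∧
  (∀ x, (g x).IsSymm) ∧ (∀ x, IsUnit (g x))

/-- The Christoffel symbols of the Levi-Civita connection of `g`. -/
noncomputable def Christoffel {n : ℕ} (g : MetricField n) (k i j : Fin n) (x : Pt n) : ℝ :=
  (1 / 2) * ∑ l, (g x)⁻¹ k l *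
    (pd i (fun y => g y l j) x + pd j (fun y => g y l i) x - pd l (fun y => g y i j) x)

/-- The (1,3) Riemann curvature tensor `R^k{}_{l i j}` of the Levi-Civita connection. -/
noncomputable def RiemannUp {n : ℕ} (g : MetricField n) (k l i j : Fin n) (x : Pt n) : ℝ :=
  pd i (Christoffel g k j l) x - pd j (Christoffel g k i l) x
    + ∑ m, (Christoffel g k i m x * Christoffel g m j l x
        - Christoffel g k j m x * Christoffel g m i l x)

/-- The (0,2) Ricci tensor. -/
noncomputable def Ricci {n : ℕ} (g : MetricField n) (i j : Fin n) (x : Pt n) : ℝ :=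
  ∑ k, RiemannUp g k i k j x

/-- The scalar curvature (trace of Ricci with respect to the inverse metric). -/
noncomputable def ScalarCurv {n : ℕ} (g : MetricField n) (x : Pt n) : ℝ :=
  ∑ i, ∑ j, (g x)⁻¹ i j * Ricci g i j x

/-- The Einstein tensor `G = Ric − (1/2) S g`. -/
noncomputable def Einstein {n : ℕ} (g : MetricField n) (i j : Fin n) (x : Pt n) : ℝ :=
  Ricci g i j x - (1 / 2) * ScalarCurv g x * g x i j

/-- Covariant divergence `∇ᵃ T_{ab}` of a (0,2) tensor field, with respect to the
Levi-Civita connection of `g` (index raised with the inverse metric). -/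
noncomputable def covDiv {n : ℕ} (g : MetricField n)
    (T : Fin n → Fin n → Pt n → ℝ) (b : Fin n) (x : Pt n) : ℝ :=
  ∑ a, ∑ c, (g x)⁻¹ a c *
    (pd c (T a b) x - ∑ m, Christoffel g m c a x * T m b x
      - ∑ m, Christoffel g m c b x * T a m x)

noncomputable def prj {n : ℕ} (j : Fin n) : (Pt n) →L[ℝ] ℝ := ContinuousLinearMap.proj j

lemma hasF {n : ℕ} (j : Fin n) (x : Pt n) :
    HasFDerivAt (fun y : Pt n => y j) (prj j) x := (prj j).hasFDerivAt

lemma pd_const {n : ℕ} (i : Fin n) (c : ℝ) (x : Pt n) : pd i (fun _ => c) x = 0 := by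
  simp [pd]

lemma pd_coord {n : ℕ} (i j : Fin n) (x : Pt n) :
    pd i (fun y => y j) x = if j = i then 1 else 0 := by
  rw [pd, (hasF j x).fderiv]; simp [prj, Pi.single_apply]

lemma pd_neg_coord {n : ℕ} (i j : Fin n) (x : Pt n) :
    pd i (fun y => -y j) x = if j = i then -1 else 0 := by
  rw [pd, ((hasF j x).fun_neg).fderiv]; simp [prj, Pi.single_apply]; split <;> norm_num

lemma pd_H {n : ℕ} (i a b : Fin n) (x : Pt n) :
    pd i (fun y => y a * y a - y b * y b) x =
      (if a = i then 2 * x a else 0) - (if b = i then 2 * x b else 0) := by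
  have h := (((hasF a x).fun_mul (hasF a x)).fun_sub ((hasF b x).fun_mul (hasF b x))).fderiv
  rw [pd, h]; simp [prj, Pi.single_apply]; split <;> split <;> ring

noncomputable def gM : MetricField 4 := fun y =>
  !![y 2 * y 2 - y 3 * y 3, 1, 0, 0; 1, 0, 0, 0; 0, 0, -1, 0; 0, 0, 0, -1]

noncomputable def gInv : Pt 4 → Matrix (Fin 4) (Fin 4) ℝ := fun y =>
  !![0, 1, 0, 0; 1, -(y 2 * y 2 - y 3 * y 3), 0, 0; 0, 0, -1, 0; 0, 0, 0, -1]

lemma gM_mul_gInv (x : Pt 4) : gM x * gInv x = 1 := by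
  ext i j
  fin_cases i <;> fin_cases j <;>
    simp [gM, gInv, Matrix.mul_apply, Fin.sum_univ_four, Matrix.one_apply,
      Matrix.vecHead, Matrix.vecTail]

lemma gM_inv (x : Pt 4) : (gM x)⁻¹ = gInv x :=
  Matrix.inv_eq_right_inv (gM_mul_gInv x)

lemma gM_symm (x : Pt 4) : (gM x).IsSymm := by
  rw [Matrix.IsSymm]
  ext i j
  fin_cases i <;> fin_cases j <;> simp [gM, Matrix.vecHead, Matrix.vecTail]

lemma gM_unit (x : Pt 4) : IsUnit (gM x) := by
  rw [Matrix.isUnit_iff_isUnit_det, isUnit_iff_ne_zero]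
  have : (gM x).det = -1 := by
    simp [gM, Matrix.det_succ_row_zero, Fin.sum_univ_succ, Matrix.vecHead, Matrix.vecTail,
      Fin.succAbove]
  rw [this]; norm_num

lemma gM_smooth (i j : Fin 4) : ContDiff ℝ (⊤ : ℕ∞) fun x => gM x i j := by
  fin_cases i <;> fin_cases j <;>
    simp only [gM, Matrix.cons_val', Matrix.cons_val_zero, Matrix.cons_val_one,
      Matrix.head_cons, Matrix.empty_val', Matrix.cons_val_fin_one, Matrix.head_fin_const,
      Matrix.vecHead, Matrix.vecTail, Matrix.cons_val_two, Matrix.cons_val_three,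
      Matrix.tail_cons, Fin.isValue] <;>
    first
      | exact contDiff_const
      | exact ((((prj 2).contDiff).mul ((prj 2).contDiff)).sub
          (((prj 3).contDiff).mul ((prj 3).contDiff)))

noncomputable def Pmat (x : Pt 4) : Matrix (Fin 4) (Fin 4) ℝ :=
  !![1, 1, 0, 0; (1 - (x 2 * x 2 - x 3 * x 3))/2, (-1 - (x 2 * x 2 - x 3 * x 3))/2, 0, 0;
     0, 0, 1, 0; 0, 0, 0, 1]

lemma Pmat_unit (x : Pt 4) : IsUnit (Pmat x) := by
  rw [Matrix.isUnit_iff_isUnit_det, isUnit_iff_ne_zero]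
  have : (Pmat x).det = -1 := by
    simp [Pmat, Matrix.det_succ_row_zero, Fin.sum_univ_succ, Matrix.vecHead, Matrix.vecTail,
      Fin.succAbove]
    ring
  rw [this]; norm_num

lemma Pmat_diag (x : Pt 4) :
    (Pmat x).transpose * gM x * Pmat x
      = Matrix.diagonal (fun i => if i = 0 then (1 : ℝ) else -1) := by
  ext i j
  fin_cases i <;> fin_cases j <;>
    simp [Pmat, gM, Matrix.mul_apply, Fin.sum_univ_four, Matrix.diagonal, Matrix.transpose,
      Matrix.vecHead, Matrix.vecTail] <;>
    ring

lemma pd_g (i l j : Fin 4) (x : Pt 4) : pd i (fun y => gM y l j) x =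
    if l = 0 ∧ j = 0 then
      ((if (2 : Fin 4) = i then 2 * x 2 else 0) - (if (3 : Fin 4) = i then 2 * x 3 else 0))
    else 0 := by
  fin_cases l <;> fin_cases j <;>
    simp [gM, Matrix.vecHead, Matrix.vecTail, pd_const, pd_H]

/-- The explicit Christoffel symbols of `gM`. -/
noncomputable def Γf (k i j : Fin 4) : Pt 4 → ℝ :=
  if (k = 1 ∧ ((i = 0 ∧ j = 2) ∨ (i = 2 ∧ j = 0))) ∨ (k = 2 ∧ i = 0 ∧ j = 0) then
    (fun x => x 2)
  else if (k = 1 ∧ ((i = 0 ∧ j = 3) ∨ (i = 3 ∧ j = 0))) ∨ (k = 3 ∧ i = 0 ∧ j = 0) then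
    (fun x => -x 3)
  else fun _ => 0

lemma chris (k i j : Fin 4) : Christoffel gM k i j = Γf k i j := by
  funext x
  rw [Christoffel, Fin.sum_univ_four]
  simp only [pd_g, gM_inv]
  fin_cases k <;> fin_cases i <;> fin_cases j <;>
    simp [Γf, gInv, Matrix.vecHead, Matrix.vecTail]

lemma ricci_zero (i j : Fin 4) (x : Pt 4) : Ricci gM i j x = 0 := by
  rw [Ricci]
  simp only [RiemannUp, chris, Fin.sum_univ_four]
  fin_cases i <;> fin_cases j <;>
    simp [Γf, pd_coord, pd_neg_coord, pd_const]

lemma riem_nonzero (x : Pt 4) : RiemannUp gM 2 0 2 0 x = 1 := by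
  simp only [RiemannUp, chris, Fin.sum_univ_four]
  simp [Γf, pd_coord, pd_neg_coord, pd_const]

lemma scalar_zero (x : Pt 4) : ScalarCurv gM x = 0 := by
  simp [ScalarCurv, ricci_zero]

lemma einstein_zero (i j : Fin 4) (x : Pt 4) : Einstein gM i j x = 0 := by
  simp [Einstein, ricci_zero, scalar_zero]

lemma gM_isMetric : IsMetric gM :=
  ⟨gM_smooth, gM_symm, gM_unit⟩

lemma gM_riem_not_all_zero :
    ¬ (∀ (k l i j : Fin 4) (x : Pt 4), RiemannUp gM k l i j x = 0) := by
  intro h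
  have h1 := h 2 0 2 0 (fun _ => 0)
  rw [riem_nonzero] at h1
  exact one_ne_zero h1


/-- There exists a Ricci-flat Lorentzian metric (signature (+,−,−,−)) whose Riemann
tensor is not identically zero; consequently, no constant multiple of the Einstein
tensor can be non-zero whenever the Riemann tensor is non-zero. -/
theorem exists_ricci_flat_with_nonzero_riemann :
    (∃ g : MetricField 4, IsMetric g ∧
        (∀ x : Pt 4, ∃ P : Matrix (Fin 4) (Fin 4) ℝ, IsUnit P ∧
          P.transpose * g x * P
            = Matrix.diagonal (fun i => if i = 0 then (1 : ℝ) else -1)) ∧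
        (∀ (i j : Fin 4) (x : Pt 4), Ricci g i j x = 0) ∧
        ¬ (∀ (k l i j : Fin 4) (x : Pt 4), RiemannUp g k l i j x = 0)) ∧
    ∀ c : ℝ,
      ¬ (∀ g : MetricField 4, IsMetric g →
          ¬ (∀ (k l i j : Fin 4) (x : Pt 4), RiemannUp g k l i j x = 0) →
          ¬ (∀ (i j : Fin 4) (x : Pt 4), c * Einstein g i j x = 0)) := by
  constructor
  · exact ⟨gM, gM_isMetric,
      fun x => ⟨Pmat x, Pmat_unit x, Pmat_diag x⟩,
      fun i j x => ricci_zero i j x,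
      gM_riem_not_all_zero⟩
  · intro c h
    exact h gM gM_isMetric gM_riem_not_all_zero
      (fun i j x => by rw [einstein_zero]; ring)
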